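/- Fix I ∈ ℕ with I ≥ 1, a mesh size h > 0, a time step Δt > 0, and set λ = Δt/h. Let f : ℝ → ℝ be differentiable with 0 ≤ f'(x) and λ·f'(x) ≤ 1 for every x ∈ ℝ. Let U : ℕ → (ZMod I → ℝ) satisfy the upwind scheme U^{n+1}_i = U^n_i − λ(f(U^n_i) − f(U^n_{i−1})), and let 𝒩 : ℕ → (ZMod I → ℝ) have residual ℐ^n_i = (𝒩^{n+1}_i − 𝒩^n_i)/Δt + (f(𝒩^n_i) − f(𝒩^n_{i−1}))/h. Then for every n ∈ ℕ, the one-step ℓ¹ stability estimate holds: (1/I)·Σ_{i ∈ ZMod I} |𝒩^{n+1}_i − U^{n+1}_i| ≤ (1/I)·Σ_{i ∈ ZMod I} |𝒩^n_i − U^n_i| + Δt · (1/I)·Σ_{i ∈ ZMod I} |ℐ^n_i|. -/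

import Mathlib

lemma upwind_slope_exists (lam : ℝ) (f : ℝ → ℝ) (hf : Differentiable ℝ f)
    (hf' : ∀ x : ℝ, 0 ≤ deriv f x) (hcfl : ∀ x : ℝ, lam * deriv f x ≤ 1) (a b : ℝ) :
    ∃ c : ℝ, 0 ≤ c ∧ lam * c ≤ 1 ∧ f a - f b = c * (a - b) := by
  rcases lt_trichotomy a b with hab | hab | hab
  · obtain ⟨c, -, hc⟩ := exists_deriv_eq_slope f hab hf.continuous.continuousOn
      hf.differentiableOn
    refine ⟨deriv f c, hf' _, hcfl _, ?_⟩
    have h1 : f b - f a = deriv f c * (b - a) :=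
      ((div_eq_iff (by linarith : b - a ≠ 0)).mp hc.symm)
    linear_combination -h1
  · exact ⟨0, le_refl 0, by norm_num, by rw [hab]; ring⟩
  · obtain ⟨c, -, hc⟩ := exists_deriv_eq_slope f hab hf.continuous.continuousOn
      hf.differentiableOn
    refine ⟨deriv f c, hf' _, hcfl _, ?_⟩
    have h1 : f a - f b = deriv f c * (a - b) :=
      ((div_eq_iff (by linarith : a - b ≠ 0)).mp hc.symm)
    linarith

/-- One-step `ℓ¹` stability of the upwind scheme under the CFL condition. -/
theorem upwind_one_step_l1_stability
    (I : ℕ) [NeZero I] (hI : 1 ≤ I)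
    (h Δt lam : ℝ) (hh : 0 < h) (hΔt : 0 < Δt) (hlam : lam = Δt / h)
    (f : ℝ → ℝ) (hf : Differentiable ℝ f)
    (hf' : ∀ x : ℝ, 0 ≤ deriv f x) (hcfl : ∀ x : ℝ, lam * deriv f x ≤ 1)
    (U 𝒩 : ℕ → ZMod I → ℝ)
    (hU : ∀ (n : ℕ) (i : ZMod I),
      U (n + 1) i = U n i - lam * (f (U n i) - f (U n (i - 1))))
    (ℐ : ℕ → ZMod I → ℝ)
    (hℐ : ∀ (n : ℕ) (i : ZMod I),
      ℐ n i = (𝒩 (n + 1) i - 𝒩 n i) / Δt + (f (𝒩 n i) - f (𝒩 n (i - 1))) / h) :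
    ∀ n : ℕ,
      (1 / (I : ℝ)) * ∑ i : ZMod I, |𝒩 (n + 1) i - U (n + 1) i| ≤
        (1 / (I : ℝ)) * ∑ i : ZMod I, |𝒩 n i - U n i| +
          Δt * ((1 / (I : ℝ)) * ∑ i : ZMod I, |ℐ n i|) := by
  intro n
  have hlam0 : 0 < lam := hlam ▸ div_pos hΔt hh
  choose c hc0 hc1 hceq using
    fun i : ZMod I => upwind_slope_exists lam f hf hf' hcfl (𝒩 n i) (U n i)
  have hN : ∀ i : ZMod I, 𝒩 (n + 1) i
      = 𝒩 n i - lam * (f (𝒩 n i) - f (𝒩 n (i - 1))) + Δt * ℐ n i := by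
    intro i
    rw [hℐ n i, hlam]
    field_simp
    ring
  have hrep : ∀ i : ZMod I, 𝒩 (n + 1) i - U (n + 1) i
      = (1 - lam * c i) * (𝒩 n i - U n i)
        + (lam * c (i - 1)) * (𝒩 n (i - 1) - U n (i - 1)) + Δt * ℐ n i := by
    intro i
    rw [hN i, hU n i]
    linear_combination (-lam) * hceq i + lam * hceq (i - 1)
  have hpt : ∀ i : ZMod I, |𝒩 (n + 1) i - U (n + 1) i|
      ≤ (1 - lam * c i) * |𝒩 n i - U n i|
        + (lam * c (i - 1)) * |𝒩 n (i - 1) - U n (i - 1)| + Δt * |ℐ n i| := by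
    intro i
    rw [hrep i]
    calc |(1 - lam * c i) * (𝒩 n i - U n i)
          + (lam * c (i - 1)) * (𝒩 n (i - 1) - U n (i - 1)) + Δt * ℐ n i|
        ≤ |(1 - lam * c i) * (𝒩 n i - U n i)
            + (lam * c (i - 1)) * (𝒩 n (i - 1) - U n (i - 1))| + |Δt * ℐ n i| :=
          abs_add_le _ _
      _ ≤ |(1 - lam * c i) * (𝒩 n i - U n i)|
            + |(lam * c (i - 1)) * (𝒩 n (i - 1) - U n (i - 1))| + |Δt * ℐ n i| :=
          add_le_add_left (abs_add_le _ _) _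
      _ = (1 - lam * c i) * |𝒩 n i - U n i|
            + (lam * c (i - 1)) * |𝒩 n (i - 1) - U n (i - 1)| + Δt * |ℐ n i| := by
          rw [abs_mul, abs_mul, abs_mul,
            abs_of_nonneg (by linarith [hc1 i] : (0:ℝ) ≤ 1 - lam * c i),
            abs_of_nonneg hlam0.le, abs_of_nonneg (hc0 (i - 1)),
            abs_mul, abs_of_nonneg hΔt.le]
  have hsum : ∑ i : ZMod I, |𝒩 (n + 1) i - U (n + 1) i|
      ≤ ∑ i : ZMod I, |𝒩 n i - U n i| + Δt * ∑ i : ZMod I, |ℐ n i| := by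
    have hshift : ∑ i : ZMod I, (lam * c (i - 1)) * |𝒩 n (i - 1) - U n (i - 1)|
        = ∑ i : ZMod I, (lam * c i) * |𝒩 n i - U n i| :=
      Fintype.sum_equiv (Equiv.subRight (1 : ZMod I)) _ _ (fun i => rfl)
    calc ∑ i : ZMod I, |𝒩 (n + 1) i - U (n + 1) i|
        ≤ ∑ i : ZMod I, ((1 - lam * c i) * |𝒩 n i - U n i|
            + (lam * c (i - 1)) * |𝒩 n (i - 1) - U n (i - 1)| + Δt * |ℐ n i|) :=
          Finset.sum_le_sum fun i _ => hpt i
      _ = ∑ i : ZMod I, (1 - lam * c i) * |𝒩 n i - U n i|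
            + ∑ i : ZMod I, (lam * c (i - 1)) * |𝒩 n (i - 1) - U n (i - 1)|
            + ∑ i : ZMod I, Δt * |ℐ n i| := by
          rw [Finset.sum_add_distrib, Finset.sum_add_distrib]
      _ = ∑ i : ZMod I, (1 - lam * c i) * |𝒩 n i - U n i|
            + ∑ i : ZMod I, (lam * c i) * |𝒩 n i - U n i|
            + ∑ i : ZMod I, Δt * |ℐ n i| := by rw [hshift]
      _ = ∑ i : ZMod I, |𝒩 n i - U n i| + Δt * ∑ i : ZMod I, |ℐ n i| := by
          rw [← Finset.sum_add_distrib, Finset.mul_sum]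
          congr 1
          exact Finset.sum_congr rfl fun i _ => by ring
  have hIpos : (0:ℝ) ≤ 1 / (I : ℝ) := by positivity
  calc (1 / (I : ℝ)) * ∑ i : ZMod I, |𝒩 (n + 1) i - U (n + 1) i|
      ≤ (1 / (I : ℝ)) * (∑ i : ZMod I, |𝒩 n i - U n i| + Δt * ∑ i : ZMod I, |ℐ n i|) :=
        mul_le_mul_of_nonneg_left hsum hIpos
    _ = (1 / (I : ℝ)) * ∑ i : ZMod I, |𝒩 n i - U n i|
          + Δt * ((1 / (I : ℝ)) * ∑ i : ZMod I, |ℐ n i|) := by ring
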